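/- A CNF formula Δ is unsatisfiable (no model M satisfies M ⊨ Δ) if and only if there exists a natural number n such that Δ ⊢ᵣⁿ ∅ is derivable in the sized resolution proof system. -/
import Mathlib


/-- A literal: a propositional variable (ℕ) with a sign. -/
structure Lit where
  var : ℕ
  sign : Bool
deriving DecidableEq

/-- The opposite literal. -/
def Lit.neg (l : Lit) : Lit := ⟨l.var, !l.sign⟩

/-- A clause: a finite set of literals, read disjunctively. -/
abbrev Clause := Finset Lit

/-- A CNF formula: a finite set of clauses, read conjunctively. -/
abbrev CNF := Finset Clause

/-- A valuation: a finite set of literals, read conjunctively. -/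
abbrev Valu := Finset Lit

/-- A model: a boolean assignment to literals respecting negation. -/
def IsModel (M : Lit → Bool) : Prop := ∀ l : Lit, M l = true ↔ ¬ (M (Lit.neg l) = true)

/-- `M ⊨ Γ` for a valuation (set of literals) `Γ`. -/
def SatVal (M : Lit → Bool) (Γ : Valu) : Prop := ∀ l ∈ Γ, M l = true

/-- `M ⊨ Δ` for a CNF formula `Δ`. -/
def SatCNF (M : Lit → Bool) (Δ : CNF) : Prop := ∀ C ∈ Δ, ∃ l ∈ C, M l = true

/-- A consistent valuation. -/
def Consistent (Γ : Valu) : Prop := ∀ l ∈ Γ, Lit.neg l ∉ Γ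

/-- The DPLL derivability relation `Γ ⊢ Δ`. -/
inductive DPLL : Valu → CNF → Prop
  | conflict (Γ : Valu) (Δ : CNF) : (∅ : Clause) ∈ Δ → DPLL Γ Δ
  | unit (Γ : Valu) (Δ : CNF) (l : Lit) : ({l} : Clause) ∈ Δ →
      DPLL (insert l Γ) (Δ.erase {l}) → DPLL Γ Δ
  | elim (Γ : Valu) (Δ : CNF) (C : Clause) (l : Lit) : l ∈ Γ → l ∈ C → C ∈ Δ →
      DPLL Γ (Δ.erase C) → DPLL Γ Δ
  | red (Γ : Valu) (Δ : CNF) (C : Clause) (l : Lit) : l ∈ Γ → Lit.neg l ∈ C → C ∈ Δ →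
      DPLL Γ (insert (C.erase (Lit.neg l)) (Δ.erase C)) → DPLL Γ Δ
  | split (Γ : Valu) (Δ : CNF) (l : Lit) :
      DPLL (insert l Γ) Δ → DPLL (insert (Lit.neg l) Γ) Δ → DPLL Γ Δ

/-- The sized DPLL derivability relation `Γ ⊢ⁿ Δ`. -/
inductive DPLLn : Valu → ℕ → CNF → Prop
  | conflict (Γ : Valu) (Δ : CNF) : (∅ : Clause) ∈ Δ → DPLLn Γ 0 Δ
  | unit (Γ : Valu) (Δ : CNF) (l : Lit) (n : ℕ) : ({l} : Clause) ∈ Δ →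
      DPLLn (insert l Γ) n (Δ.erase {l}) → DPLLn Γ (n + 1) Δ
  | elim (Γ : Valu) (Δ : CNF) (C : Clause) (l : Lit) (n : ℕ) : l ∈ Γ → l ∈ C → C ∈ Δ →
      DPLLn Γ n (Δ.erase C) → DPLLn Γ (n + 1) Δ
  | red (Γ : Valu) (Δ : CNF) (C : Clause) (l : Lit) (n : ℕ) : l ∈ Γ → Lit.neg l ∈ C → C ∈ Δ →
      DPLLn Γ n (insert (C.erase (Lit.neg l)) (Δ.erase C)) → DPLLn Γ (n + 1) Δ
  | split (Γ : Valu) (Δ : CNF) (l : Lit) (n m : ℕ) :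
      DPLLn (insert l Γ) n Δ → DPLLn (insert (Lit.neg l) Γ) m Δ → DPLLn Γ (n + m + 1) Δ

/-- The sized resolution derivability relation `Δ ⊢ᵣⁿ C`. -/
inductive Res : CNF → ℕ → Clause → Prop
  | sub (Δ : CNF) (C₀ C : Clause) : C₀ ∈ Δ → C₀ ⊆ C → Res Δ 0 C
  | res (Δ : CNF) (C C' : Clause) (l : Lit) (n m : ℕ) :
      Res Δ n (insert l C) → Res Δ m (insert (Lit.neg l) C') → Res Δ (n + m + 1) (C ∪ C')
namespace ResAux

/-- Variables occurring in a CNF. -/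
def vars (Δ : CNF) : Finset ℕ := Δ.biUnion (fun C => C.image Lit.var)

/-- Assign variable x the value b in Δ. -/
def assign (x : ℕ) (b : Bool) (Δ : CNF) : CNF :=
  (Δ.filter (fun C => (⟨x, b⟩ : Lit) ∉ C)).image (fun C => C.erase ⟨x, !b⟩)

lemma weaken {Δ : CNF} {n : ℕ} {C : Clause} (h : Res Δ n C) :
    ∀ {D : Clause}, C ⊆ D → Res Δ n D := by
  induction h with
  | sub C₀ C h1 h2 => exact fun hCD => Res.sub _ _ _ h1 (h2.trans hCD)
  | res C C' l n m h1 h2 ih1 ih2 =>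
    intro D hCD
    have r1 : Res Δ n (insert l D) :=
      ih1 (Finset.insert_subset_insert _ (Finset.subset_union_left.trans hCD))
    have r2 : Res Δ m (insert (Lit.neg l) D) :=
      ih2 (Finset.insert_subset_insert _ (Finset.subset_union_right.trans hCD))
    simpa using Res.res Δ D D l n m r1 r2

lemma sound {Δ : CNF} {n : ℕ} {C : Clause} (h : Res Δ n C) {M : Lit → Bool}
    (hM : IsModel M) (hS : SatCNF M Δ) : ∃ l ∈ C, M l = true := by
  induction h with
  | sub C₀ C h1 h2 =>
    obtain ⟨l, hl, hMl⟩ := hS C₀ h1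
    exact ⟨l, h2 hl, hMl⟩
  | res C C' l n m h1 h2 ih1 ih2 =>
    obtain ⟨l1, hl1, hM1⟩ := ih1
    obtain ⟨l2, hl2, hM2⟩ := ih2
    rcases Finset.mem_insert.1 hl1 with rfl | h
    · rcases Finset.mem_insert.1 hl2 with rfl | h'
      · exact absurd hM2 ((hM l1).1 hM1)
      · exact ⟨l2, Finset.mem_union_right _ h', hM2⟩
    · exact ⟨l1, Finset.mem_union_left _ h, hM1⟩

lemma lift {x : ℕ} {b : Bool} {Δ : CNF} {n : ℕ} {C : Clause}
    (h : Res (assign x b Δ) n C) : ∃ m, Res Δ m (insert (⟨x, !b⟩ : Lit) C) := by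
  induction h with
  | sub C₀ C h1 h2 =>
    rw [assign, Finset.mem_image] at h1
    obtain ⟨D, hD, rfl⟩ := h1
    have hDΔ : D ∈ Δ := (Finset.mem_filter.1 hD).1
    refine ⟨0, Res.sub _ D _ hDΔ ?_⟩
    intro a ha
    by_cases hax : a = (⟨x, !b⟩ : Lit)
    · exact hax ▸ Finset.mem_insert_self _ _
    · exact Finset.mem_insert_of_mem (h2 (Finset.mem_erase.2 ⟨hax, ha⟩))
  | res C C' l n m h1 h2 ih1 ih2 =>
    obtain ⟨m1, r1⟩ := ih1
    obtain ⟨m2, r2⟩ := ih2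
    refine ⟨m1 + m2 + 1, ?_⟩
    have r1' : Res Δ m1 (insert l (insert (⟨x, !b⟩ : Lit) C)) := by
      rwa [Finset.insert_comm]
    have r2' : Res Δ m2 (insert (Lit.neg l) (insert (⟨x, !b⟩ : Lit) C')) := by
      rwa [Finset.insert_comm]
    have := Res.res Δ _ _ l m1 m2 r1' r2'
    convert this using 1
    ext a; simp only [Finset.mem_insert, Finset.mem_union]; tauto

lemma unsat_assign {Δ : CNF} (hΔ : ¬ ∃ M : Lit → Bool, IsModel M ∧ SatCNF M Δ)
    (x : ℕ) (b : Bool) :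
    ¬ ∃ M : Lit → Bool, IsModel M ∧ SatCNF M (assign x b Δ) := by
  rintro ⟨M, hM, hS⟩
  apply hΔ
  refine ⟨fun l => if l.var = x then (l.sign == b) else M l, ?_, ?_⟩
  · intro l
    by_cases hl : l.var = x
    · simp only [Lit.neg, hl, if_pos rfl]
      cases l.sign <;> cases b <;> simp
    · simp only [Lit.neg, hl, if_neg hl]
      exact hM l
  · intro C hC
    by_cases hxb : (⟨x, b⟩ : Lit) ∈ C
    · exact ⟨⟨x, b⟩, hxb, by simp⟩
    · have : C.erase ⟨x, !b⟩ ∈ assign x b Δ := by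
        rw [assign, Finset.mem_image]
        exact ⟨C, Finset.mem_filter.2 ⟨hC, hxb⟩, rfl⟩
      obtain ⟨l, hl, hMl⟩ := hS _ this
      have hlC := Finset.mem_of_mem_erase hl
      have hlne : l ≠ (⟨x, !b⟩ : Lit) := (Finset.mem_erase.1 hl).1
      have hlx : l.var ≠ x := by
        intro hx
        have : l = ⟨x, b⟩ ∨ l = ⟨x, !b⟩ := by
          rcases Bool.eq_or_eq_not l.sign b with hs | hs
          · left; cases l; simp_all
          · right; cases l; simp_all
        rcases this with rfl | rfl
        · exact hxb hlC
        · exact hlne rfl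
      exact ⟨l, hlC, by simp [hlx, hMl]⟩

lemma vars_assign_subset (x : ℕ) (b : Bool) (Δ : CNF) :
    vars (assign x b Δ) ⊆ (vars Δ).erase x := by
  intro y hy
  rw [vars, Finset.mem_biUnion] at hy
  obtain ⟨C', hC', hy'⟩ := hy
  rw [assign, Finset.mem_image] at hC'
  obtain ⟨D, hD, rfl⟩ := hC'
  have hDΔ : D ∈ Δ := (Finset.mem_filter.1 hD).1
  have hDb : (⟨x, b⟩ : Lit) ∉ D := by simpa using (Finset.mem_filter.1 hD).2
  rw [Finset.mem_image] at hy'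
  obtain ⟨l, hl, rfl⟩ := hy'
  have hlD := Finset.mem_of_mem_erase hl
  have hlne : l ≠ (⟨x, !b⟩ : Lit) := (Finset.mem_erase.1 hl).1
  refine Finset.mem_erase.2 ⟨?_, ?_⟩
  · intro hx
    have : l = ⟨x, b⟩ ∨ l = ⟨x, !b⟩ := by
      rcases Bool.eq_or_eq_not l.sign b with hs | hs
      · left; cases l; simp_all
      · right; cases l; simp_all
    rcases this with rfl | rfl
    · exact hDb hlD
    · exact hlne rfl
  · rw [vars, Finset.mem_biUnion]
    exact ⟨D, hDΔ, Finset.mem_image_of_mem _ hlD⟩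

lemma complete_aux : ∀ (k : ℕ) (Δ : CNF), (vars Δ).card ≤ k →
    (¬ ∃ M : Lit → Bool, IsModel M ∧ SatCNF M Δ) → ∃ n, Res Δ n (∅ : Clause) := by
  intro k
  induction k with
  | zero =>
    intro Δ hcard hΔ
    have hv : vars Δ = ∅ := Finset.card_eq_zero.1 (Nat.le_zero.1 hcard)
    have hmem : (∅ : Clause) ∈ Δ := by
      by_contra hne
      apply hΔ
      refine ⟨fun l => l.sign, fun l => by cases l with | mk v s => cases s <;> simp [Lit.neg], ?_⟩
      intro C hC
      have : C ≠ ∅ := fun h => hne (h ▸ hC)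
      obtain ⟨l, hl⟩ := Finset.nonempty_iff_ne_empty.2 this
      exfalso
      have : l.var ∈ vars Δ := by
        rw [vars, Finset.mem_biUnion]
        exact ⟨C, hC, Finset.mem_image_of_mem _ hl⟩
      simp [hv] at this
    exact ⟨0, Res.sub _ ∅ ∅ hmem (by simp)⟩
  | succ k ih =>
    intro Δ hcard hΔ
    by_cases hv : vars Δ = ∅
    · exact ih Δ (by simp [hv]) hΔ
    · obtain ⟨x, hx⟩ := Finset.nonempty_iff_ne_empty.2 hv
      have hcard' : ∀ b : Bool, (vars (assign x b Δ)).card ≤ k := by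
        intro b
        have h1 := Finset.card_le_card (vars_assign_subset x b Δ)
        have h2 : ((vars Δ).erase x).card < (vars Δ).card := Finset.card_erase_lt_of_mem hx
        omega
      obtain ⟨n₁, r₁⟩ := ih _ (hcard' true) (unsat_assign hΔ x true)
      obtain ⟨n₂, r₂⟩ := ih _ (hcard' false) (unsat_assign hΔ x false)
      obtain ⟨m₁, s₁⟩ := lift r₁
      obtain ⟨m₂, s₂⟩ := lift r₂
      -- s₁ : Res Δ m₁ {⟨x, !true⟩} = {⟨x,false⟩}, s₂ : Res Δ m₂ {⟨x,true⟩}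
      refine ⟨m₂ + m₁ + 1, ?_⟩
      have hres := Res.res Δ ∅ ∅ (⟨x, true⟩ : Lit) m₂ m₁ (by simpa using s₂)
        (by simpa [Lit.neg] using s₁)
      simpa using hres

end ResAux

/-- Unsatisfiability is equivalent to having a resolution refutation. -/
theorem resolution_unsat_iff (Δ : CNF) :
    (¬ ∃ M : Lit → Bool, IsModel M ∧ SatCNF M Δ) ↔ ∃ n : ℕ, Res Δ n (∅ : Clause) := by
  constructor
  · exact ResAux.complete_aux (ResAux.vars Δ).card Δ le_rfl
  · rintro ⟨n, hn⟩ ⟨M, hM, hS⟩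
    obtain ⟨l, hl, _⟩ := ResAux.sound hn hM hS
    simp at hl
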